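/- For every q ∈ (0,1) and every n ≥ 0 there exists a Borel probability measure π on ℝ × ℝ whose first marginal is μ_n, whose second marginal is μ_{n+1}, and which is concentrated on {(x, y) : x ≤ y ≤ 2x}. In particular, ∫ z dμ_{n+1}(z) ≥ ∫ z dμ_n(z). -/

import Mathlib

open MeasureTheory ProbabilityTheory Filter

noncomputable def Sfun : ℝ × ℝ → ℝ := fun p => p.1 + p.2

noncomputable def Dfun : ℝ × ℝ × ℝ × ℝ → ℝ := fun p =>
  ((p.1 + p.2.1) * (p.2.2.1 + p.2.2.2)) / (p.1 + p.2.1 + p.2.2.1 + p.2.2.2)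

/-- One-step resistance recursion map on Borel measures on ℝ. -/
noncomputable def Tq (q : ℝ) (μ : Measure ℝ) : Measure ℝ :=
  ENNReal.ofReal (1 - q) • Measure.map Sfun (μ.prod μ) +
    ENNReal.ofReal q • Measure.map Dfun (μ.prod (μ.prod (μ.prod μ)))

/-- μₙ = T_qⁿ δ₁ : law of the two-terminal resistance after n replacement steps. -/
noncomputable def mu (q : ℝ) (n : ℕ) : Measure ℝ := (Tq q)^[n] (Measure.dirac 1)

/-!
Run the recursion on couplings. If `(Xᵢ, Yᵢ)` are independent copies of a coupling of `(μₙ, μₙ₊₁)`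
concentrated on the band `1 ≤ x ≤ y ≤ 2x`, then applying `S`, resp. `D`, to the `X`'s and to the
`Y`'s, with the same coin for both, couples `T_q μₙ = μₙ₊₁` with `T_q μₙ₊₁ = μₙ₊₂`. The band is
preserved because `S` and `D` are monotone in each argument and positively homogeneous, so
`S(x) ≤ S(y) ≤ S(2x) = 2 S(x)`, and likewise for `D`. The induction starts from `δ₁ ⊗ μ₁`, as `μ₁`
lives on `[1, 2]`. The inequality of means is then `x ≤ y` integrated against the coupling.
-/

open Set

noncomputable def recursionMap {X Y : Type*} [MeasurableSpace X] [MeasurableSpace Y] (q : ℝ)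
    (f : X × X → Y) (g : X × X × X × X → Y) (μ : Measure X) : Measure Y :=
  ENNReal.ofReal (1 - q) • Measure.map f (μ.prod μ) +
    ENNReal.ofReal q • Measure.map g (μ.prod (μ.prod (μ.prod μ)))

lemma ae_mem_prod {X Y : Type*} [MeasurableSpace X] [MeasurableSpace Y] {μ : Measure X}
    {ν : Measure Y} {s : Set X} {t : Set Y} (hs : ∀ᵐ x ∂μ, x ∈ s) (ht : ∀ᵐ y ∂ν, y ∈ t) :
    ∀ᵐ p ∂μ.prod ν, p ∈ s ×ˢ t :=
  (Measure.quasiMeasurePreserving_fst.ae hs).and (Measure.quasiMeasurePreserving_snd.ae ht)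

section RecursionMap

variable {X Y Z : Type*} [MeasurableSpace X] [MeasurableSpace Y] [MeasurableSpace Z] {q : ℝ}
  {f : X × X → Y} {g : X × X × X × X → Y}

lemma isProbabilityMeasure_recursionMap (hq : q ∈ Icc (0 : ℝ) 1) (hf : Measurable f)
    (hg : Measurable g) (μ : Measure X) [IsProbabilityMeasure μ] :
    IsProbabilityMeasure (recursionMap q f g μ) := by
  have := Measure.isProbabilityMeasure_map (μ := μ.prod μ) hf.aemeasurable
  have := Measure.isProbabilityMeasure_map (μ := μ.prod (μ.prod (μ.prod μ))) hg.aemeasurable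
  constructor
  simp only [recursionMap, Measure.coe_add, Measure.coe_smul, Pi.add_apply, Pi.smul_apply,
    measure_univ, smul_eq_mul, mul_one]
  rw [← ENNReal.ofReal_add (by linarith [hq.2]) hq.1]
  norm_num

lemma ae_recursionMap {s : Set X} {t : Set Y} (ht : MeasurableSet t) (hf : Measurable f)
    (hg : Measurable g) (hfs : MapsTo f (s ×ˢ s) t) (hgs : MapsTo g (s ×ˢ s ×ˢ s ×ˢ s) t)
    {μ : Measure X} [SFinite μ] (hμ : ∀ᵐ x ∂μ, x ∈ s) :
    ∀ᵐ y ∂recursionMap q f g μ, y ∈ t := by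
  have h2 := ae_mem_prod hμ hμ
  have h4 := ae_mem_prod hμ (ae_mem_prod hμ h2)
  simp only [recursionMap, ae_add_measure_iff]
  exact ⟨Measure.ae_smul_measure ((ae_map_iff hf.aemeasurable ht).2 (h2.mono hfs)) _,
    Measure.ae_smul_measure ((ae_map_iff hg.aemeasurable ht).2 (h4.mono hgs)) _⟩

lemma map_recursionMap {h : Y → Z} (hh : Measurable h) (hf : Measurable f) (hg : Measurable g)
    (μ : Measure X) : (recursionMap q f g μ).map h = recursionMap q (h ∘ f) (h ∘ g) μ := by
  simp only [recursionMap, Measure.map_add _ _ hh, Measure.map_smul, Measure.map_map hh hf,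
    Measure.map_map hh hg]

lemma recursionMap_map {k : Z → X} (hk : Measurable k) (hf : Measurable f) (hg : Measurable g)
    (ν : Measure Z) [SFinite ν] :
    recursionMap q f g (ν.map k) =
      recursionMap q (f ∘ Prod.map k k) (g ∘ Prod.map k (Prod.map k (Prod.map k k))) ν := by
  simp only [recursionMap, Measure.map_prod_map _ _ hk hk,
    Measure.map_prod_map _ _ hk (hk.prodMap hk),
    Measure.map_prod_map _ _ hk (hk.prodMap (hk.prodMap hk)), Measure.map_map hf (hk.prodMap hk),
    Measure.map_map hg (hk.prodMap (hk.prodMap (hk.prodMap hk)))]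

end RecursionMap

lemma Tq_eq_recursionMap (q : ℝ) : Tq q = recursionMap q Sfun Dfun := rfl

lemma measurable_Sfun : Measurable Sfun := by unfold Sfun; fun_prop

lemma measurable_Dfun : Measurable Dfun := by unfold Dfun; fun_prop

noncomputable def parallel (a b : ℝ) : ℝ := a * b / (a + b)

lemma Dfun_eq_parallel (x₁ x₂ x₃ x₄ : ℝ) :
    Dfun (x₁, x₂, x₃, x₄) = parallel (x₁ + x₂) (x₃ + x₄) := by
  simp only [Dfun, parallel, add_assoc]

lemma parallel_le_parallel {a b a' b' : ℝ} (ha : 0 < a) (hb : 0 < b) (haa' : a ≤ a')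
    (hbb' : b ≤ b') : parallel a b ≤ parallel a' b' := by
  unfold parallel
  rw [div_le_div_iff₀ (by linarith) (by linarith)]
  nlinarith [mul_nonneg (mul_nonneg ha.le (by linarith : (0:ℝ) ≤ a')) (sub_nonneg.2 hbb'),
    mul_nonneg (mul_nonneg hb.le (by linarith : (0:ℝ) ≤ b')) (sub_nonneg.2 haa')]

lemma one_le_parallel {a b : ℝ} (ha : 2 ≤ a) (hb : 2 ≤ b) : 1 ≤ parallel a b := by
  unfold parallel
  rw [le_div_iff₀ (by linarith)]
  nlinarith [mul_nonneg (by linarith : (0:ℝ) ≤ a - 2) (by linarith : (0:ℝ) ≤ b - 2)]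

lemma parallel_le_left {a b : ℝ} (ha : 0 < a) (hb : 0 < b) : parallel a b ≤ a := by
  unfold parallel
  rw [div_le_iff₀ (by linarith)]
  nlinarith

lemma parallel_two_mul (a b : ℝ) : parallel (2 * a) (2 * b) = 2 * parallel a b := by
  unfold parallel
  rw [← mul_add, div_eq_mul_inv, mul_inv]
  ring


lemma mapsTo_Sfun_Icc (M : ℝ) : MapsTo Sfun (Icc 1 M ×ˢ Icc 1 M) (Icc 1 (2 * M)) := by
  rintro ⟨x, y⟩ ⟨⟨hx₁, hxM⟩, ⟨hy₁, hyM⟩⟩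
  exact ⟨by simp only [Sfun]; linarith, by simp only [Sfun]; linarith⟩

lemma mapsTo_Dfun_Icc (M : ℝ) :
    MapsTo Dfun (Icc 1 M ×ˢ Icc 1 M ×ˢ Icc 1 M ×ˢ Icc 1 M) (Icc 1 (2 * M)) := by
  rintro ⟨x₁, x₂, x₃, x₄⟩ ⟨⟨h₁, h₁M⟩, ⟨h₂, h₂M⟩, ⟨h₃, -⟩, ⟨h₄, -⟩⟩
  rw [Dfun_eq_parallel]
  exact ⟨one_le_parallel (by linarith) (by linarith),
    (parallel_le_left (by linarith) (by linarith)).trans (by linarith)⟩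

def band : Set (ℝ × ℝ) := {p | 1 ≤ p.1 ∧ p.1 ≤ p.2 ∧ p.2 ≤ 2 * p.1}

lemma measurableSet_band : MeasurableSet band :=
  (measurableSet_le measurable_const measurable_fst).inter
    ((measurableSet_le measurable_fst measurable_snd).inter
      (measurableSet_le measurable_snd (measurable_const.mul measurable_fst)))

lemma add_mem_band {p p' : ℝ × ℝ} (hp : p ∈ band) (hp' : p' ∈ band) :
    (p.1 + p'.1, p.2 + p'.2) ∈ band := by
  obtain ⟨h₁, h₂, h₃⟩ := hp
  obtain ⟨h₁', h₂', h₃'⟩ := hp'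
  exact ⟨by dsimp only; linarith, by dsimp only; linarith, by dsimp only; linarith⟩

lemma parallel_mem_band {p p' : ℝ × ℝ} (hp : p ∈ band) (hp' : p' ∈ band) (h₂ : 2 ≤ p.1)
    (h₂' : 2 ≤ p'.1) : (parallel p.1 p'.1, parallel p.2 p'.2) ∈ band := by
  obtain ⟨-, hle, hle₂⟩ := hp
  obtain ⟨-, hle', hle₂'⟩ := hp'
  refine ⟨one_le_parallel h₂ h₂', parallel_le_parallel (by linarith) (by linarith) hle hle', ?_⟩
  calc parallel p.2 p'.2 ≤ parallel (2 * p.1) (2 * p'.1) :=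
        parallel_le_parallel (by linarith) (by linarith) hle₂ hle₂'
    _ = 2 * parallel p.1 p'.1 := parallel_two_mul _ _

noncomputable def Spair : (ℝ × ℝ) × (ℝ × ℝ) → ℝ × ℝ := fun p =>
  (Sfun (p.1.1, p.2.1), Sfun (p.1.2, p.2.2))

noncomputable def Dpair : (ℝ × ℝ) × (ℝ × ℝ) × (ℝ × ℝ) × (ℝ × ℝ) → ℝ × ℝ := fun p =>
  (Dfun (p.1.1, p.2.1.1, p.2.2.1.1, p.2.2.2.1), Dfun (p.1.2, p.2.1.2, p.2.2.1.2, p.2.2.2.2))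

lemma measurable_Spair : Measurable Spair := by unfold Spair Sfun; fun_prop

lemma measurable_Dpair : Measurable Dpair :=
  (measurable_Dfun.comp (by fun_prop)).prodMk (measurable_Dfun.comp (by fun_prop))

lemma mapsTo_Spair_band : MapsTo Spair (band ×ˢ band) band :=
  fun _ ⟨h₁, h₂⟩ => add_mem_band h₁ h₂

lemma mapsTo_Dpair_band : MapsTo Dpair (band ×ˢ band ×ˢ band ×ˢ band) band := by
  rintro ⟨p₁, p₂, p₃, p₄⟩ ⟨h₁, h₂, h₃, h₄⟩
  have h₁₂ := add_mem_band h₁ h₂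
  have h₃₄ := add_mem_band h₃ h₄
  simpa only [Dpair, Dfun_eq_parallel] using
    parallel_mem_band h₁₂ h₃₄ (by linarith [h₁.1, h₂.1]) (by linarith [h₃.1, h₄.1])

noncomputable def Tpair (q : ℝ) : Measure (ℝ × ℝ) → Measure (ℝ × ℝ) := recursionMap q Spair Dpair

lemma map_fst_Tpair (q : ℝ) (π : Measure (ℝ × ℝ)) [SFinite π] :
    (Tpair q π).map Prod.fst = Tq q (π.map Prod.fst) := by
  rw [Tpair, map_recursionMap measurable_fst measurable_Spair measurable_Dpair,
    Tq_eq_recursionMap, recursionMap_map measurable_fst measurable_Sfun measurable_Dfun]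
  rfl

lemma map_snd_Tpair (q : ℝ) (π : Measure (ℝ × ℝ)) [SFinite π] :
    (Tpair q π).map Prod.snd = Tq q (π.map Prod.snd) := by
  rw [Tpair, map_recursionMap measurable_snd measurable_Spair measurable_Dpair,
    Tq_eq_recursionMap, recursionMap_map measurable_snd measurable_Sfun measurable_Dfun]
  rfl

lemma mu_succ (q : ℝ) (n : ℕ) : mu q (n + 1) = Tq q (mu q n) :=
  Function.iterate_succ_apply' _ _ _

lemma isProbabilityMeasure_mu {q : ℝ} (hq : q ∈ Icc (0 : ℝ) 1) (n : ℕ) :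
    IsProbabilityMeasure (mu q n) := by
  induction n with
  | zero => exact Measure.dirac.isProbabilityMeasure
  | succ n ih =>
    rw [mu_succ, Tq_eq_recursionMap]
    exact isProbabilityMeasure_recursionMap hq measurable_Sfun measurable_Dfun _

lemma ae_mem_Icc_mu {q : ℝ} (hq : q ∈ Icc (0 : ℝ) 1) (n : ℕ) :
    ∀ᵐ x ∂mu q n, x ∈ Icc 1 (2 ^ n) := by
  induction n with
  | zero => exact ae_dirac_iff measurableSet_Icc |>.2 (by norm_num)
  | succ n ih =>
    have := isProbabilityMeasure_mu hq n
    rw [mu_succ, Tq_eq_recursionMap, pow_succ']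
    exact ae_recursionMap measurableSet_Icc measurable_Sfun measurable_Dfun
      (mapsTo_Sfun_Icc _) (mapsTo_Dfun_Icc _) ih

lemma exists_coupling_mu {q : ℝ} (hq : q ∈ Icc (0 : ℝ) 1) (n : ℕ) :
    ∃ π : Measure (ℝ × ℝ), IsProbabilityMeasure π ∧
      π.map Prod.fst = mu q n ∧ π.map Prod.snd = mu q (n + 1) ∧ ∀ᵐ p ∂π, p ∈ band := by
  have := isProbabilityMeasure_mu hq
  induction n with
  | zero =>
    have hdirac : ∀ᵐ x ∂Measure.dirac (1 : ℝ), x ∈ ({1} : Set ℝ) :=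
      (ae_dirac_iff (measurableSet_singleton 1)).2 rfl
    refine ⟨(Measure.dirac 1).prod (mu q 1), inferInstance, ?_, by simp, ?_⟩
    · rw [Measure.map_fst_prod, measure_univ, one_smul]
      rfl
    refine (ae_mem_prod hdirac (ae_mem_Icc_mu hq 1)).mono ?_
    rintro ⟨x, y⟩ ⟨rfl, hy₁, hy₂⟩
    exact ⟨le_rfl, hy₁, by simpa using hy₂⟩
  | succ n ih =>
    obtain ⟨π, hπ, hfst, hsnd, hband⟩ := ih
    refine ⟨Tpair q π, isProbabilityMeasure_recursionMap hq measurable_Spair measurable_Dpair π,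
      by rw [map_fst_Tpair, hfst, mu_succ], by rw [map_snd_Tpair, hsnd, mu_succ q (n + 1)],
      ae_recursionMap measurableSet_band measurable_Spair measurable_Dpair mapsTo_Spair_band
        mapsTo_Dpair_band hband⟩

lemma integral_map_fst_le_integral_map_snd {π : Measure (ℝ × ℝ)}
    (h₁ : Integrable (fun x ↦ x) (π.map Prod.fst)) (h₂ : Integrable (fun y ↦ y) (π.map Prod.snd))
    (hle : ∀ᵐ p ∂π, p.1 ≤ p.2) : ∫ x, x ∂π.map Prod.fst ≤ ∫ y, y ∂π.map Prod.snd := by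
  rw [integral_map measurable_fst.aemeasurable h₁.aestronglyMeasurable,
    integral_map measurable_snd.aemeasurable h₂.aestronglyMeasurable]
  exact integral_mono_ae (h₁.comp_measurable measurable_fst) (h₂.comp_measurable measurable_snd) hle

lemma integrable_mu {q : ℝ} (hq : q ∈ Icc (0 : ℝ) 1) (n : ℕ) : Integrable (fun x ↦ x) (mu q n) :=
  have := isProbabilityMeasure_mu hq n
  .of_mem_Icc 1 (2 ^ n) aemeasurable_id (ae_mem_Icc_mu hq n)

theorem stmt8 (q : ℝ) (hq : q ∈ Set.Ioo (0 : ℝ) 1) (n : ℕ) :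
    (∃ π : Measure (ℝ × ℝ), IsProbabilityMeasure π ∧
      π.map Prod.fst = mu q n ∧ π.map Prod.snd = mu q (n + 1) ∧
      π {p : ℝ × ℝ | ¬ (p.1 ≤ p.2 ∧ p.2 ≤ 2 * p.1)} = 0) ∧
    ∫ z, z ∂(mu q n) ≤ ∫ z, z ∂(mu q (n + 1)) := by
  obtain ⟨π, hπ, hfst, hsnd, hband⟩ := exists_coupling_mu (Ioo_subset_Icc_self hq) n
  refine ⟨⟨π, hπ, hfst, hsnd, ae_iff.1 (hband.mono fun _ hp => hp.2)⟩, ?_⟩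
  rw [← hfst, ← hsnd]
  refine integral_map_fst_le_integral_map_snd ?_ ?_ (hband.mono fun _ hp => hp.2.1)
  · exact hfst ▸ integrable_mu (Ioo_subset_Icc_self hq) n
  · exact hsnd ▸ integrable_mu (Ioo_subset_Icc_self hq) (n + 1)
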